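/- For all nonnegative integers i and j, 2·e(2(i+j)+1) = e(2j)·√(e(2i+1)²·(a²+4)−4) + e(2i+1)·√(e(2j)²·(a²+4)+4). -/
import Mathlib


def e (a : ℕ) : ℕ → ℤ
  | 0 => 0
  | 1 => 1
  | (n+2) => a * e a (n+1) + e a n

def L (a : ℕ) : ℕ → ℤ
  | 0 => 2
  | (n+1) => e a (n+2) + e a n

lemma e_nonneg (a n : ℕ) : 0 ≤ e a n := by
  induction n using Nat.strong_induction_on with
  | _ n ih =>
    match n with
    | 0 => simp [e]
    | 1 => simp [e]
    | n+2 =>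
      have h1 := ih (n+1) (by omega)
      have h2 := ih n (by omega)
      have ha : (0:ℤ) ≤ a := Int.ofNat_nonneg a
      show 0 ≤ (a:ℤ) * e a (n+1) + e a n
      positivity

lemma L_nonneg (a n : ℕ) : 0 ≤ L a n := by
  match n with
  | 0 => norm_num [L]
  | n+1 =>
    have := e_nonneg a (n+2); have := e_nonneg a n
    show (0:ℤ) ≤ e a (n+2) + e a n
    linarith

lemma e_add (a : ℕ) : ∀ m n, e a (m+n+1) = e a (m+1) * e a (n+1) + e a m * e a n := by
  intro m
  induction m using Nat.strong_induction_on with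
  | _ m ih =>
    match m with
    | 0 => intro n; simp [e]
    | 1 =>
      intro n
      rw [show 1+n+1 = n+2 by omega]
      show (a:ℤ) * e a (n+1) + e a n = e a (1+1) * e a (n+1) + e a 1 * e a n
      simp [e]
    | m+2 =>
      intro n
      have h1 := ih (m+1) (by omega) n
      have h2 := ih m (by omega) n
      have key : m+2+n+1 = (m+n+1)+2 := by ring
      rw [key]
      show (a:ℤ) * e a (m+n+1+1) + e a (m+n+1) = e a (m+3) * e a (n+1) + e a (m+2) * e a n
      have e3 : e a (m+3) = (a:ℤ) * e a (m+2) + e a (m+1) := rfl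
      have e2 : e a (m+2) = (a:ℤ) * e a (m+1) + e a m := rfl
      have h1' : e a (m+n+2) = e a (m+2) * e a (n+1) + e a (m+1) * e a n := by
        have : m+1+n+1 = m+n+2 := by ring
        rw [this] at h1; convert h1 using 2
      rw [show m+n+1+1 = m+n+2 from rfl, h1', h2, e3, e2]; ring

lemma cassini (a : ℕ) (n : ℕ) : e a (n+2) * e a n - e a (n+1)^2 = (-1)^(n+1) := by
  induction n with
  | zero => simp [e]
  | succ n ih =>
    have h3 : e a (n+3) = (a:ℤ) * e a (n+2) + e a (n+1) := rfl
    have h2 : e a (n+2) = (a:ℤ) * e a (n+1) + e a n := rfl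
    rw [pow_succ (-1:ℤ) (n+1)]
    linear_combination (-1:ℤ) * ih + e a (n+1) * h3 - e a (n+2) * h2

lemma L_sq (a : ℕ) (n : ℕ) : L a n ^ 2 = ((a:ℤ)^2 + 4) * e a n ^ 2 + 4 * (-1)^n := by
  match n with
  | 0 => simp [L, e]
  | n+1 =>
    have h2 : e a (n+2) = (a:ℤ) * e a (n+1) + e a n := rfl
    have hc := cassini a n
    show (e a (n+2) + e a n)^2 = _
    linear_combination (e a (n+2) - e a n + (a:ℤ) * e a (n+1)) * h2 + 4 * hc

lemma two_e_add (a m n : ℕ) : 2 * e a (m+n) = e a m * L a n + e a n * L a m := by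
  match m, n with
  | 0, n => simp [e, L]; ring
  | m+1, 0 => simp [e, L]; ring
  | m+1, n+1 =>
    have h1 := e_add a m (n+1)
    have h2 := e_add a n (m+1)
    have key : m+1+(n+1) = m+(n+1)+1 := by ring
    have key2 : n+(m+1)+1 = m+(n+1)+1 := by ring
    rw [key2] at h2
    rw [key]
    show 2 * e a (m+(n+1)+1) = e a (m+1) * (e a (n+2) + e a n) + e a (n+1) * (e a (m+2) + e a m)
    linear_combination h1 + h2

theorem stmt9 (a : ℕ) (ha : 0 < a) (i j : ℕ) :
    2 * (e a (2*(i+j) + 1) : ℝ)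
      = (e a (2*j) : ℝ) * Real.sqrt ((e a (2*i + 1) : ℝ)^2 * (a^2 + 4) - 4)
        + (e a (2*i + 1) : ℝ) * Real.sqrt ((e a (2*j) : ℝ)^2 * (a^2 + 4) + 4) := by
  have hs1 : ((e a (2*i+1) : ℝ))^2 * (a^2 + 4) - 4 = ((L a (2*i+1) : ℤ) : ℝ)^2 := by
    have hz : (e a (2*i+1))^2 * ((a:ℤ)^2 + 4) - 4 = (L a (2*i+1))^2 := by
      have h := L_sq a (2*i+1)
      have hpow : ((-1:ℤ))^(2*i+1) = -1 := by rw [pow_succ, pow_mul]; norm_num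
      rw [hpow] at h; linarith
    exact_mod_cast hz
  have hs2 : ((e a (2*j) : ℝ))^2 * (a^2 + 4) + 4 = ((L a (2*j) : ℤ) : ℝ)^2 := by
    have hz : (e a (2*j))^2 * ((a:ℤ)^2 + 4) + 4 = (L a (2*j))^2 := by
      have h := L_sq a (2*j)
      have hpow : ((-1:ℤ))^(2*j) = 1 := by rw [pow_mul]; norm_num
      rw [hpow] at h; linarith
    exact_mod_cast hz
  rw [hs1, hs2, Real.sqrt_sq (by exact_mod_cast L_nonneg a (2*i+1)),
    Real.sqrt_sq (by exact_mod_cast L_nonneg a (2*j))]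
  have key := two_e_add a (2*i+1) (2*j)
  have harg : 2*i+1+2*j = 2*(i+j)+1 := by ring
  rw [harg] at key
  have : (2 * e a (2*(i+j)+1) : ℤ) = e a (2*j) * L a (2*i+1) + e a (2*i+1) * L a (2*j) := by
    linarith [key]
  exact_mod_cast this
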